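/- Let L be a finite relational language, H a hereditary L-property, φ(x̄;ȳ) a quantifier-free L-formula, ℓ ≥ 0, and N ≥ m ≥ 1 integers. There exists K₀ (depending on φ, ℓ, N, m) such that for all K ≥ K₀: if 𝔸 is an (ℓ,|ȳ|)-box of height K with |S_φ^H(𝔸)| = 2^{K^ℓ} and 𝔸′ ⊆ 𝔸 is a sub-box of height m, then there exist subsets Γ₁, …, Γ_{2^{m^ℓ}} of S_φ^H(𝔸) and pairwise distinct types p₁, …, p_{2^{m^ℓ}} in S_φ^H(𝔸′) such that (i) for each 1 ≤ i ≤ 2^{m^ℓ}, every element of Γ_i is an extension of p_i to 𝔸, and (ii) if ℓ > 0 then |Γ_i| ≥ N for each i. -/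

import Mathlib

open FirstOrder Set Function Filter

universe u v w

namespace PaperVC

/-- `𝔸` is an `(ℓ,t)`-box of height `m` in `X`: it is a concatenation product `A₁ ⋯ A_ℓ` of sets
`A_i ⊆ X^{k_i}` (`k_i ≥ 1`, `k₁+⋯+k_ℓ = t`); the fibers of a monotone surjection
`c : Fin t → Fin ℓ` encode the consecutive blocks of coordinates, and each `A_i` has size `m`.
By convention a `(0,t)`-box with `t ≥ 1` is a singleton, and a `(0,0)`-box is the empty set. -/
def IsBoxOfHeight (X : Type*) (ℓ t m : ℕ) (𝔸 : Set (Fin t → X)) : Prop :=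
  (ℓ = 0 ∧ t = 0 ∧ 𝔸 = ∅) ∨
  (ℓ = 0 ∧ 0 < t ∧ ∃ b, 𝔸 = {b}) ∨
  (0 < ℓ ∧ ∃ c : Fin t → Fin ℓ, Monotone c ∧ Function.Surjective c ∧
    ∃ A : (i : Fin ℓ) → Set ({j : Fin t // c j = i} → X),
      (∀ i, (A i).Finite ∧ (A i).ncard = m) ∧
      𝔸 = { b | ∀ i, (fun j : {j : Fin t // c j = i} => b j.1) ∈ A i })

/-- The underlying set of a set of tuples: the set of all coordinates of its tuples. -/
def underlying {X : Type*} {t : ℕ} (𝔹 : Set (Fin t → X)) : Set X :=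
  { x | ∃ b ∈ 𝔹, ∃ j, b j = x }

/-- A family `F` of subsets of `Y` shatters `A ⊆ Y` if every subset of `A` is cut out by a
member of `F`. -/
def Shatters {Y : Type*} (F : Set (Set Y)) (A : Set Y) : Prop :=
  ∀ B ⊆ A, ∃ S ∈ F, S ∩ A = B
/-- `𝔸` is an `(ℓ,t)`-box of height `K` and `𝔸'` is a sub-box of `𝔸` of height `m`
(with respect to a common decomposition): `𝔸 = A₁⋯A_ℓ`, `𝔸' = A₁'⋯A_ℓ'` with `A_i' ⊆ A_i`.
For `ℓ = 0` the only sub-box of a box is the box itself. -/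
def IsSubBoxPair (X : Type*) (ℓ t K m : ℕ) (𝔸 𝔸' : Set (Fin t → X)) : Prop :=
  (ℓ = 0 ∧ 𝔸' = 𝔸 ∧ IsBoxOfHeight X ℓ t K 𝔸) ∨
  (0 < ℓ ∧ ∃ c : Fin t → Fin ℓ, Monotone c ∧ Function.Surjective c ∧
    ∃ A A' : (i : Fin ℓ) → Set ({j : Fin t // c j = i} → X),
      (∀ i, (A i).Finite ∧ (A i).ncard = K) ∧
      (∀ i, (A' i).Finite ∧ (A' i).ncard = m) ∧
      (∀ i, A' i ⊆ A i) ∧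
      𝔸 = { b | ∀ i, (fun j : {j : Fin t // c j = i} => b j.1) ∈ A i } ∧
      𝔸' = { b | ∀ i, (fun j : {j : Fin t // c j = i} => b j.1) ∈ A' i })
/-- The data of a complete equality type in `k` variables over a parameter set contained in `X`:
which pairs of variables are equal, and which variables are equal to which parameters. -/
def EqType (X : Type*) (k : ℕ) :=
  (Fin k → Fin k → Prop) × (Fin k → X → Prop)

/-- The complete equality type over `A ⊆ X` (whose elements are identified with elements of `W`
via `ι`, assumed injective on `A`) realized by the tuple `u : Fin k → W`. -/
def eqTypeOf {X : Type*} {W : Type*} (A : Set X) (ι : X → W) {k : ℕ} (u : Fin k → W) :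
    EqType X k :=
  ⟨fun i j => u i = u j, fun i x => x ∈ A ∧ u i = ι x⟩

/-- `S_k^∅(A)`: the set of complete equality types in `k` variables over `A`; every consistent
such type is realized by a tuple in `X ⊕ Fin k` (with `X` embedded by `Sum.inl`). -/
def EqTypes {X : Type*} (A : Set X) (k : ℕ) : Set (EqType X k) :=
  Set.range fun u : Fin k → (X ⊕ Fin k) => eqTypeOf A Sum.inl u
/-- The structure induced on `α` by pulling back a structure on `β` along a map `f : α → β`
(for relational languages). -/
noncomputable def pullback {L : FirstOrder.Language.{u, v}} [L.IsRelational]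
    {α : Type*} {β : Type*} (f : α → β) (M : L.Structure β) : L.Structure α where
  funMap := fun {_} F _ => isEmptyElim F
  RelMap := fun {_} R x => M.RelMap R (f ∘ x)

/-- A hereditary `L`-property: a family of finite `L`-structures (one set of structures with
universe `Fin n = {1,…,n}` for each `n`), closed under pulling back along arbitrary injections;
this encodes closure under isomorphism and under induced substructures. -/
structure HerProp (L : FirstOrder.Language.{u, v}) [L.IsRelational] where
  sets : ∀ n : ℕ, Set (L.Structure (Fin n))
  hereditary : ∀ {m n : ℕ} (f : Fin m ↪ Fin n) (M : L.Structure (Fin n)),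
    M ∈ sets n → pullback (⇑f) M ∈ sets m

/-- Realization of a first-order formula in a structure given as a term. -/
def realizeIn {L : FirstOrder.Language.{u, v}} {W : Type w} (M : L.Structure W)
    {α : Type*} (φ : L.Formula α) (v : α → W) : Prop :=
  letI := M
  φ.Realize v

/-- The `φ`-type (identified with its positive part, a subset of `𝔸`) of the tuple `a` over the
set of parameter tuples `𝔸` (transferred into `W` via `ι`), in the structure `M`. -/
def phiTypeOf {L : FirstOrder.Language.{u, v}} {W : Type w} (M : L.Structure W) {s t : ℕ}
    (φ : L.Formula (Fin s ⊕ Fin t)) {X : Type*} (𝔸 : Set (Fin t → X)) (ι : X → W)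
    (a : Fin s → W) : Set (Fin t → X) :=
  { b ∈ 𝔸 | realizeIn M φ (Sum.elim a (ι ∘ b)) }

variable {L : FirstOrder.Language.{u, v}} [L.IsRelational]

/-- `S_φ^H(𝔸)`: the set of `φ`-types over `𝔸` (identified with their positive parts)
realized in some member of `H` (the parameters being transferred into the member by an
injection on the underlying set of `𝔸`). -/
def Sphi (H : HerProp L) {s t : ℕ} (φ : L.Formula (Fin s ⊕ Fin t)) {X : Type*}
    (𝔸 : Set (Fin t → X)) : Set (Set (Fin t → X)) :=
  { q | ∃ n : ℕ, ∃ M ∈ H.sets n, ∃ ι : X → Fin n, Set.InjOn ι (underlying 𝔸) ∧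
      ∃ a : Fin s → Fin n, phiTypeOf M φ 𝔸 ι a = q }

/-- `S_{φ,m}^H(𝔸,ρ)`: the set of unions `p₁(x̄₁) ∪ ⋯ ∪ p_m(x̄_m)` (identified with the tuple
`(p₁,…,p_m)` of positive parts of `φ`-types over `𝔸`) realized in some member of `H` by
pairwise distinct `s`-tuples `ā₁,…,ā_m` such that moreover each pair `(ā_i,ā_j)`, `i ≠ j`,
realizes the equality type `ρ` over the underlying set of `𝔸`. -/
def SphiM (H : HerProp L) {s t : ℕ} (φ : L.Formula (Fin s ⊕ Fin t)) (m : ℕ) {X : Type*}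
    (𝔸 : Set (Fin t → X)) (ρ : EqType X (s + s)) : Set (Fin m → Set (Fin t → X)) :=
  { P | ∃ n : ℕ, ∃ M ∈ H.sets n, ∃ ι : X → Fin n, Set.InjOn ι (underlying 𝔸) ∧
      ∃ a : Fin m → Fin s → Fin n, Function.Injective a ∧
        (∀ i, phiTypeOf M φ 𝔸 ι (a i) = P i) ∧
        (∀ i j, i ≠ j → eqTypeOf (underlying 𝔸) ι (Fin.append (a i) (a j)) = ρ) }

/-- The witness predicate for `VC*_ℓ(φ,H) ≥ m`: there are an `(ℓ,t)`-box `𝔸` of height `m`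
and an equality type `ρ ∈ S_{2s}^∅(𝔸)` with `|S_{φ,m}^H(𝔸,ρ)| = 2^(m^(ℓ+1))`. -/
def VCstarWitness (H : HerProp L) (ℓ : ℕ) {s t : ℕ} (φ : L.Formula (Fin s ⊕ Fin t))
    (m : ℕ) : Prop :=
  ∃ 𝔸 : Set (Fin t → ℕ), IsBoxOfHeight ℕ ℓ t m 𝔸 ∧
    ∃ ρ ∈ EqTypes (underlying 𝔸) (s + s),
      Nat.card (SphiM H φ m 𝔸 ρ) = 2 ^ m ^ (ℓ + 1)

/-- `VC*_ℓ(H)`, as an extended natural number: the supremum over quantifier-free partitioned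
formulas `φ(x̄;ȳ)` of `VC*_ℓ(φ,H)`. -/
noncomputable def VCstar (H : HerProp L) (ℓ : ℕ) : ℕ∞ :=
  sSup { N : ℕ∞ | ∃ m : ℕ, N = (m : ℕ∞) ∧ ∃ (s t : ℕ) (φ : L.Formula (Fin s ⊕ Fin t)),
      φ.IsQF ∧ VCstarWitness H ℓ φ m }

/-!
Types are identified with their positive parts, so `S_φ^H(𝔸) ⊆ 𝒫 𝔸`, and for `ℓ > 0` the box `𝔸`
has `K^ℓ` elements: the hypothesis `|S_φ^H(𝔸)| = 2^(K^ℓ)` says that every subset of `𝔸` is a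
realized type. Restricting to `𝔸'` realizes every subset `p` of `𝔸'`, and `p` extends to the types
`p ∪ {b}`, `b ∈ 𝔸 \ 𝔸'`, of which there are `K^ℓ - m^ℓ ≥ N` once `K ≥ N + m^ℓ`.
For `ℓ = 0` we have `𝔸' = 𝔸`, and the two realized types are their own extensions.
-/

section Enumeration

variable {α : Type*}

lemma exists_injective_fin_of_le_ncard {S : Set α} {n : ℕ} (h : n ≤ S.ncard) :
    ∃ f : Fin n → α, Injective f ∧ ∀ i, f i ∈ S := by
  rcases n.eq_zero_or_pos with rfl | hn
  · exact ⟨Fin.elim0, fun i => i.elim0, fun i => i.elim0⟩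
  have := (Set.finite_of_ncard_pos (hn.trans_le h)).to_subtype
  let e : S ≃ Fin S.ncard := Finite.equivFinOfCardEq (Nat.card_coe_set_eq S)
  exact ⟨fun i => e.symm (Fin.castLE h i),
    fun i j hij => Fin.castLE_injective h (e.symm.injective (Subtype.ext hij)),
    fun i => (e.symm _).2⟩

lemma ncard_sdiff_le_ncard_setOf_inter_eq {𝔸 𝔸' p : Set α} (h𝔸 : 𝔸.Finite) (hp : p ⊆ 𝔸)
    (hp' : p ⊆ 𝔸') : (𝔸 \ 𝔸').ncard ≤ {q | q ⊆ 𝔸 ∧ q ∩ 𝔸' = p}.ncard := by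
  refine Set.ncard_le_ncard_of_injOn (fun b => insert b p) ?_ ?_ (h𝔸.finite_subsets.subset
    fun q hq => hq.1)
  · rintro b ⟨hb, hb'⟩
    exact ⟨Set.insert_subset hb hp, by rw [Set.insert_inter_of_notMem hb',
      Set.inter_eq_self_of_subset_left hp']⟩
  · rintro b ⟨-, hb'⟩ b' - hbb'
    have : b ∈ insert b' p := by
      rw [← show insert b p = insert b' p from hbb']
      exact Set.mem_insert b p
    exact this.resolve_right fun hbp => hb' (hp' hbp)

end Enumeration

section Box

variable {X : Type*} {ℓ t : ℕ}

def boxEquiv (c : Fin t → Fin ℓ) (A : (i : Fin ℓ) → Set ({j : Fin t // c j = i} → X)) :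
    { b : Fin t → X | ∀ i, (fun j : {j : Fin t // c j = i} => b j.1) ∈ A i } ≃
      ((i : Fin ℓ) → A i) :=
  (Equiv.subtypeEquiv ((Equiv.arrowCongr (Equiv.sigmaFiberEquiv c).symm (Equiv.refl X)).trans
    (Equiv.piCurry fun _ _ => X)) fun _ => by simp only [Set.mem_univ_pi]; rfl).trans
    (Equiv.Set.univPi A)

lemma finite_box_and_ncard_box {K : ℕ} (c : Fin t → Fin ℓ)
    (A : (i : Fin ℓ) → Set ({j : Fin t // c j = i} → X))
    (hA : ∀ i, (A i).Finite ∧ (A i).ncard = K) :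
    { b : Fin t → X | ∀ i, (fun j : {j : Fin t // c j = i} => b j.1) ∈ A i }.Finite ∧
    { b : Fin t → X | ∀ i, (fun j : {j : Fin t // c j = i} => b j.1) ∈ A i }.ncard = K ^ ℓ := by
  have := fun i => (hA i).1.to_subtype
  refine ⟨Set.finite_coe_iff.mp (Finite.of_equiv _ (boxEquiv c A).symm), ?_⟩
  rw [← Nat.card_coe_set_eq, Nat.card_congr (boxEquiv c A), Nat.card_pi]
  simp [Nat.card_coe_set_eq, hA]

variable {K m : ℕ} {𝔸 𝔸' : Set (Fin t → X)}

lemma IsSubBoxPair.subset (h : IsSubBoxPair X ℓ t K m 𝔸 𝔸') : 𝔸' ⊆ 𝔸 := by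
  rcases h with ⟨-, rfl, -⟩ | ⟨-, c, -, -, A, A', -, -, hAA', rfl, rfl⟩
  · exact subset_rfl
  · exact fun b hb i => hAA' i (hb i)

lemma IsSubBoxPair.finite_and_ncard (h : IsSubBoxPair X ℓ t K m 𝔸 𝔸') (hℓ : 0 < ℓ) :
    𝔸.Finite ∧ 𝔸.ncard = K ^ ℓ ∧ 𝔸'.ncard = m ^ ℓ := by
  rcases h with ⟨rfl, -⟩ | ⟨-, c, -, -, A, A', hA, hA', -, rfl, rfl⟩
  · exact absurd hℓ (lt_irrefl 0)
  · obtain ⟨h𝔸, h𝔸card⟩ := finite_box_and_ncard_box c A hA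
    exact ⟨h𝔸, h𝔸card, (finite_box_and_ncard_box c A' hA').2⟩

end Box

section Types

variable {L : FirstOrder.Language.{u, v}} [L.IsRelational] (H : HerProp L) {s t : ℕ}
  (φ : L.Formula (Fin s ⊕ Fin t)) {X : Type*} {𝔸 𝔸' : Set (Fin t → X)}

lemma sphi_subset_powerset : Sphi H φ 𝔸 ⊆ 𝒫 𝔸 := by
  rintro _ ⟨n, M, -, ι, -, a, rfl⟩ b hb
  exact hb.1

lemma inter_mem_sphi (h : 𝔸' ⊆ 𝔸) {q : Set (Fin t → X)} (hq : q ∈ Sphi H φ 𝔸) :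
    q ∩ 𝔸' ∈ Sphi H φ 𝔸' := by
  obtain ⟨n, M, hM, ι, hι, a, rfl⟩ := hq
  refine ⟨n, M, hM, ι, hι.mono ?_, a, ?_⟩
  · rintro x ⟨b, hb, j, rfl⟩
    exact ⟨b, h hb, j, rfl⟩
  · ext b
    simp only [phiTypeOf, Set.mem_inter_iff, Set.mem_ofPred_eq]
    exact ⟨fun ⟨hb', hφb⟩ => ⟨⟨h hb', hφb⟩, hb'⟩, fun ⟨⟨_, hφb⟩, hb'⟩ => ⟨hb', hφb⟩⟩

variable {H φ}

lemma sphi_eq_powerset_of_natCard (h𝔸 : 𝔸.Finite) (hcard : Nat.card (Sphi H φ 𝔸) = 2 ^ 𝔸.ncard) :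
    Sphi H φ 𝔸 = 𝒫 𝔸 :=
  Set.eq_of_subset_of_ncard_le (sphi_subset_powerset H φ)
    (by rw [Set.ncard_powerset 𝔸 h𝔸, ← hcard, Nat.card_coe_set_eq]) h𝔸.powerset

lemma sphi_eq_powerset_of_subset (h : 𝔸' ⊆ 𝔸) (h𝔸 : Sphi H φ 𝔸 = 𝒫 𝔸) :
    Sphi H φ 𝔸' = 𝒫 𝔸' := by
  refine (sphi_subset_powerset H φ).antisymm fun p hp => ?_
  have hp𝔸 : p ∈ Sphi H φ 𝔸 := h𝔸 ▸ hp.trans h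
  simpa only [Set.inter_eq_self_of_subset_left hp] using inter_mem_sphi H φ h hp𝔸

variable {ℓ K m : ℕ}

lemma natCard_sphi_of_isSubBoxPair (hbox : IsSubBoxPair X ℓ t K m 𝔸 𝔸')
    (hcard : Nat.card (Sphi H φ 𝔸) = 2 ^ K ^ ℓ) : Nat.card (Sphi H φ 𝔸') = 2 ^ m ^ ℓ := by
  rcases ℓ.eq_zero_or_pos with rfl | hℓ
  · obtain ⟨-, rfl, -⟩ | ⟨hℓ, -⟩ := hbox
    · simpa using hcard
    · exact absurd hℓ (lt_irrefl 0)
  obtain ⟨h𝔸, h𝔸card, h𝔸'card⟩ := hbox.finite_and_ncard hℓ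
  have hsub := hbox.subset
  rw [sphi_eq_powerset_of_subset hsub (sphi_eq_powerset_of_natCard h𝔸 (h𝔸card ▸ hcard)),
    Nat.card_coe_set_eq, Set.ncard_powerset 𝔸' (h𝔸.subset hsub), h𝔸'card]

lemma le_ncard_extensions {N : ℕ} (hbox : IsSubBoxPair X ℓ t K m 𝔸 𝔸') (hℓ : 0 < ℓ)
    (hK : N + m ^ ℓ ≤ K) (hcard : Nat.card (Sphi H φ 𝔸) = 2 ^ K ^ ℓ) {p : Set (Fin t → X)}
    (hp : p ∈ Sphi H φ 𝔸') : N ≤ {q ∈ Sphi H φ 𝔸 | q ∩ 𝔸' = p}.ncard := by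
  obtain ⟨h𝔸, h𝔸card, h𝔸'card⟩ := hbox.finite_and_ncard hℓ
  have hsub := hbox.subset
  have hp' : p ⊆ 𝔸' := sphi_subset_powerset H φ hp
  rw [sphi_eq_powerset_of_natCard h𝔸 (h𝔸card ▸ hcard)]
  calc N ≤ K ^ ℓ - m ^ ℓ := by have := Nat.le_self_pow hℓ.ne' K; omega
    _ = (𝔸 \ 𝔸').ncard := by rw [Set.ncard_sdiff hsub (h𝔸.subset hsub), h𝔸card, h𝔸'card]
    _ ≤ _ := ncard_sdiff_le_ncard_setOf_inter_eq h𝔸 (hp'.trans hsub) hp'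

end Types

theorem statement12_general {L : FirstOrder.Language.{u, v}} [L.IsRelational]
    (H : HerProp L) {s t : ℕ}
    (φ : L.Formula (Fin s ⊕ Fin t)) (ℓ N m : ℕ) :
    ∃ K₀ : ℕ, ∀ K, K₀ ≤ K → ∀ (X : Type w) (𝔸 𝔸' : Set (Fin t → X)),
      IsSubBoxPair X ℓ t K m 𝔸 𝔸' →
      Nat.card (Sphi H φ 𝔸) = 2 ^ K ^ ℓ →
      ∃ (Γ : Fin (2 ^ m ^ ℓ) → Set (Set (Fin t → X)))
        (p : Fin (2 ^ m ^ ℓ) → Set (Fin t → X)),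
        Function.Injective p ∧
        (∀ i, p i ∈ Sphi H φ 𝔸') ∧
        (∀ i, Γ i ⊆ Sphi H φ 𝔸) ∧
        (∀ i, ∀ q ∈ Γ i, q ∩ 𝔸' = p i) ∧
        (0 < ℓ → ∀ i, ∃ e : Fin N → Set (Fin t → X),
          Function.Injective e ∧ ∀ k, e k ∈ Γ i) := by
  refine ⟨N + m ^ ℓ, fun K hK X 𝔸 𝔸' hbox hcard => ?_⟩
  obtain ⟨p, hp_inj, hp_mem⟩ := exists_injective_fin_of_le_ncard (S := Sphi H φ 𝔸')
    (by rw [← Nat.card_coe_set_eq, natCard_sphi_of_isSubBoxPair hbox hcard])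
  refine ⟨fun i => {q ∈ Sphi H φ 𝔸 | q ∩ 𝔸' = p i}, p, hp_inj, hp_mem,
    fun i q hq => hq.1, fun i q hq => hq.2, fun hℓ i => ?_⟩
  exact exists_injective_fin_of_le_ncard (le_ncard_extensions hbox hℓ hK hcard (hp_mem i))

/-- **Claim 3.3.**  For every quantifier-free `φ(x̄;ȳ)`, `ℓ ≥ 0` and `N ≥ m ≥ 1` there is
`K₀` such that for all `K ≥ K₀`: if `𝔸` is an `(ℓ,|ȳ|)`-box of height `K` with
`|S_φ^H(𝔸)| = 2^(K^ℓ)` and `𝔸' ⊆ 𝔸` is a sub-box of height `m`, then there are subsets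
`Γ₁,…,Γ_{2^(m^ℓ)}` of `S_φ^H(𝔸)` and pairwise distinct `p₁,…,p_{2^(m^ℓ)} ∈ S_φ^H(𝔸')`
such that (i) every element of `Γ_i` is an extension of `p_i` to `𝔸`, and (ii) if `ℓ > 0`
then `|Γ_i| ≥ N` for each `i`. -/
theorem statement12 {L : FirstOrder.Language.{u, v}} [L.IsRelational]
    [∀ n, Finite (L.Relations n)] (H : HerProp L) {s t : ℕ}
    (φ : L.Formula (Fin s ⊕ Fin t)) (hφ : φ.IsQF) (ℓ N m : ℕ) (hm : 1 ≤ m) (hNm : m ≤ N) :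
    ∃ K₀ : ℕ, ∀ K, K₀ ≤ K → ∀ (X : Type w) (𝔸 𝔸' : Set (Fin t → X)),
      IsSubBoxPair X ℓ t K m 𝔸 𝔸' →
      Nat.card (Sphi H φ 𝔸) = 2 ^ K ^ ℓ →
      ∃ (Γ : Fin (2 ^ m ^ ℓ) → Set (Set (Fin t → X)))
        (p : Fin (2 ^ m ^ ℓ) → Set (Fin t → X)),
        Function.Injective p ∧
        (∀ i, p i ∈ Sphi H φ 𝔸') ∧
        (∀ i, Γ i ⊆ Sphi H φ 𝔸) ∧
        (∀ i, ∀ q ∈ Γ i, q ∩ 𝔸' = p i) ∧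
        (0 < ℓ → ∀ i, ∃ e : Fin N → Set (Fin t → X),
          Function.Injective e ∧ ∀ k, e k ∈ Γ i) :=
  statement12_general H φ ℓ N m

end PaperVC
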